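/- Let K ≥ 1, let q : PMF (Bool × Bool) and r : Fin K → PMF (Bool × Bool), and suppose that for every z : Fin K the pair (q, r z) satisfies the IV inequalities. Then for all i, j : Bool and all z, z̃ : Fin K with z ≠ z̃: q {p | (if i then p.2 else p.1) = j} ≤ r z {(i, j)} + r z {(!i, false)} + r z̃ {(i, j)} + r z̃ {(!i, true)}. -/
import Mathlib


/-- The probability (as a real number) that a PMF assigns to a set. -/
noncomputable def pr {α : Type*} (p : PMF α) (s : Set α) : ℝ := (p.toOuterMeasure s).toReal

lemma pr_eq_sum {α : Type*} [Fintype α] (p : PMF α) (s : Set α) [DecidablePred (· ∈ s)] :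
    pr p s = ∑ x : α, if x ∈ s then (p x).toReal else 0 := by
  unfold pr
  rw [PMF.toOuterMeasure_apply_fintype, ENNReal.toReal_sum
    (fun a _ => lt_of_le_of_lt (Set.indicator_le_self s p a) (p.apply_lt_top a) |>.ne)]
  exact Finset.sum_congr rfl fun a _ => by
    by_cases h : a ∈ s <;> simp [Set.indicator, h]

/-- `(q, r)` satisfies the IV inequalities (marg) and (joint), where `q` is a putative joint
law of the potential outcomes `(Y(x₀), Y(x₁))` and `r` a putative law of `(X, Y)` given
`Z = z`. -/
def SatisfiesIV (q r : PMF (Bool × Bool)) : Prop :=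
  (∀ i y : Bool,
    pr q {p | (if i then p.2 else p.1) = y} ≤ pr r {(i, y)} + pr r {p | p.1 = !i}) ∧
  (∀ y y' : Bool, pr q {(y, y')} ≤ pr r {(false, y)} + pr r {(true, y')})

/-- The cross-instrument-level bound derived in the proof of Theorem 2: the second family
of terms in the bound `g(i, j)` of equation (gijbound) follows from the IV
inequalities. -/
theorem iv_cross_level_bound
    {K : ℕ} (hK : 1 ≤ K)
    (q : PMF (Bool × Bool)) (r : Fin K → PMF (Bool × Bool))
    (hIV : ∀ z : Fin K, SatisfiesIV q (r z)) :
    ∀ i j : Bool, ∀ z z' : Fin K, z ≠ z' →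
      pr q {p | (if i then p.2 else p.1) = j}
        ≤ pr (r z) {(i, j)} + pr (r z) {(!i, false)}
          + pr (r z') {(i, j)} + pr (r z') {(!i, true)} := by
  intro i j z z' _
  obtain ⟨-, hj⟩ := hIV z
  obtain ⟨-, hj'⟩ := hIV z'
  cases i <;> [(have h1 := hj j false; have h2 := hj' j true);
               (have h1 := hj false j; have h2 := hj' true j)] <;>
    cases j <;>
    simp only [pr_eq_sum, Fintype.sum_prod_type, Set.mem_setOf_eq, Set.mem_singleton_iff,
      Prod.mk.injEq, Fintype.sum_bool, Bool.not_false, Bool.not_true, if_true, if_false] at h1 h2 ⊢ <;>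
    norm_num at h1 h2 ⊢ <;> linarith
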